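/- arXiv:1303.0892 — 7 statements merged into one kernel-verified Lean document; each statement's English description precedes it below -/
import Mathlib

section
/- Let $L = p/q$ where $p, q \in \mathbb{N}$ are relatively prime. Then for every $x \in \mathbb{R}$ and every $\eta \in \{1, \dots, q\}$, one has $f_L(\eta L - x) = f_L(\widetilde{\eta} L + x)$, where $\widetilde{\eta} = q - \eta + 1$. -/
open Filter MeasureTheory

/-- `f_{m,L}(x) = (|x-m+1|^{1/3} + |x-m-L|^{1/3} - |x-m|^{1/3} - |x-m+1-L|^{1/3})^3`. -/
noncomputable def fmL (L : ℝ) (m : ℤ) (x : ℝ) : ℝ :=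
  (|x - m + 1| ^ ((1 : ℝ) / 3) + |x - m - L| ^ ((1 : ℝ) / 3)
    - |x - m| ^ ((1 : ℝ) / 3) - |x - m + 1 - L| ^ ((1 : ℝ) / 3)) ^ 3

/-- `f_L(x) = ∑_{m ∈ ℤ} f_{m,L}(x)`. -/
noncomputable def fL (L : ℝ) (x : ℝ) : ℝ := ∑' (m : ℤ), fmL L m x

/-!
Each summand is invariant under the reflection `x ↦ c + L - x`, `c ∈ ℤ`, up to the index
change `m ↦ c + 1 - m`, which permutes the four cube-root terms of `f_{m,L}`. Hence `f_L`
itself is symmetric about `(c + L)/2` for every integer `c`. The two arguments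
`ηL - x` and `η̃L + x` add up to `(q + 1)L = p + L`, so the case `c = p` gives the claim.
-/

lemma fmL_intCast_add_sub (L y : ℝ) (c m : ℤ) :
    fmL L m (c + L - y) = fmL L (c + 1 - m) y := by
  unfold fmL
  push_cast
  rw [show (c : ℝ) + L - y - m + 1 - L = -(y - (c + 1 - m)) by ring,
    show (c : ℝ) + L - y - m + 1 = -(y - (c + 1 - m) - L) by ring,
    show (c : ℝ) + L - y - m - L = -(y - (c + 1 - m) + 1) by ring,
    show (c : ℝ) + L - y - m = -(y - (c + 1 - m) + 1 - L) by ring,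
    abs_neg, abs_neg, abs_neg, abs_neg]
  ring

lemma fL_intCast_add_sub (L y : ℝ) (c : ℤ) : fL L (c + L - y) = fL L y := by
  unfold fL
  calc ∑' m : ℤ, fmL L m (c + L - y)
      = ∑' m : ℤ, fmL L (c + 1 - m) y := tsum_congr fun m => fmL_intCast_add_sub L y c m
    _ = ∑' m : ℤ, fmL L m y := (Equiv.subLeft (c + 1)).tsum_eq fun m => fmL L m y

theorem fL_reflection_general (p q : ℕ)
    (L : ℝ) (hL : L = (p : ℝ) / (q : ℝ)) :
    ∀ (x : ℝ) (η : ℕ), 1 ≤ η → η ≤ q →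
      fL L ((η : ℝ) * L - x) = fL L (((q - η + 1 : ℕ) : ℝ) * L + x) := by
  intro x η hη hηq
  have hqL : (q : ℝ) * L = p := by
    rw [hL]
    field_simp [show (q : ℝ) ≠ 0 by norm_cast; omega]
  have hsum : ((q - η + 1 : ℕ) : ℝ) * L + x = ((p : ℤ) : ℝ) + L - ((η : ℝ) * L - x) := by
    rw [Nat.cast_add, Nat.cast_sub hηq, Int.cast_natCast, ← hqL]
    ring
  rw [hsum, fL_intCast_add_sub]

/-- If `L = p/q` in lowest terms, then for every `x ∈ ℝ` and `η ∈ {1, …, q}`,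
`f_L(ηL - x) = f_L(η̃L + x)` where `η̃ = q - η + 1`. -/
theorem fL_reflection (p q : ℕ) (hp : 0 < p) (hq : 0 < q) (hpq : Nat.Coprime p q)
    (L : ℝ) (hL : L = (p : ℝ) / (q : ℝ))
    (hsum : ∀ x : ℝ, Summable fun m : ℤ => fmL L m x) :
    ∀ (x : ℝ) (η : ℕ), 1 ≤ η → η ≤ q →
      fL L ((η : ℝ) * L - x) = fL L (((q - η + 1 : ℕ) : ℝ) * L + x) :=
  fL_reflection_general p q L hL
end

section
/- Let $L = p/q$ where $p, q \in \mathbb{N}$ are relatively prime. Then for every $m \in \mathbb{Z}$, every $x \in \mathbb{R}$, and every $\eta \in \{1, \dots, q\}$, one has $f_{m,L}(\eta L - x) = f_{\widetilde{m},L}(\widetilde{\eta} L + x)$, where $\widetilde{m} = -m + 1 + p$ and $\widetilde{\eta} = q - \eta + 1$. -/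
open Filter MeasureTheory

/-- With `t = x - m`, the substitution `t ↦ L - 1 - t` permutes the four points
`t + 1`, `t - L`, `t`, `t + 1 - L` up to sign. -/
theorem fmL_eq_of_sub_add_sub_eq {L x x' : ℝ} {m m' : ℤ} (h : (x - m) + (x' - m') = L - 1) :
    fmL L m x = fmL L m' x' := by
  have h₁ : |x' - m' + 1| = |x - m - L| := by rw [← abs_neg]; congr 1; linarith
  have h₂ : |x' - m' - L| = |x - m + 1| := by rw [← abs_neg]; congr 1; linarith
  have h₃ : |x' - m'| = |x - m + 1 - L| := by rw [← abs_neg]; congr 1; linarith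
  have h₄ : |x' - m' + 1 - L| = |x - m| := by rw [← abs_neg]; congr 1; linarith
  rw [fmL, fmL, h₁, h₂, h₃, h₄]
  ring

theorem fmL_reflection_general (p q : ℕ) (hq : 0 < q)
    (L : ℝ) (hL : L = (p : ℝ) / (q : ℝ)) :
    ∀ (m : ℤ) (x : ℝ) (η : ℕ), 1 ≤ η → η ≤ q →
      fmL L m ((η : ℝ) * L - x) = fmL L (-m + 1 + (p : ℤ)) (((q - η + 1 : ℕ) : ℝ) * L + x) := by
  intro m x η _ hηq
  have hqL : (q : ℝ) * L = p := by
    rw [hL]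
    field_simp
  apply fmL_eq_of_sub_add_sub_eq
  push_cast [Nat.cast_sub hηq]
  linear_combination hqL

/-- If `L = p/q` in lowest terms, then for every `m ∈ ℤ`, `x ∈ ℝ` and `η ∈ {1, …, q}`,
`f_{m,L}(ηL - x) = f_{m̃,L}(η̃L + x)` where `m̃ = -m + 1 + p` and `η̃ = q - η + 1`. -/
theorem fmL_reflection (p q : ℕ) (hp : 0 < p) (hq : 0 < q) (hpq : Nat.Coprime p q)
    (L : ℝ) (hL : L = (p : ℝ) / (q : ℝ)) :
    ∀ (m : ℤ) (x : ℝ) (η : ℕ), 1 ≤ η → η ≤ q →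
      fmL L m ((η : ℝ) * L - x) = fmL L (-m + 1 + (p : ℤ)) (((q - η + 1 : ℕ) : ℝ) * L + x) :=
  fmL_reflection_general p q hq L hL
end

section
/- For every $L > 0$, the family $(f_{m,L}(x))_{m \in \mathbb{Z}}$ is summable for every $x \in \mathbb{R}$, and the symmetric partial sums $\sum_{|m| \le N} f_{m,L}$ converge uniformly on $[0,1]$ to $f_L$ as $N \to \infty$. -/
open Filter MeasureTheory

/-!
Write `f_{m,L}(x) = (D(x-m) - D(x-m-L))^3` with `D(t) = |t+1|^{1/3} - |t|^{1/3}`. Away from the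
origin `t ↦ |t|^{1/3}` is Lipschitz with constant `c^{-2/3}` on `{|t| ≥ c}`, so
`|D(t)| ≤ c^{-2/3}` once `|t| ≥ c + 1`. For `x` in a bounded set both `x - m` and `x - m - L` have
size at least `|m|/2 + 1` for all but finitely many `m`, hence `|f_{m,L}(x)| ≤ 32/m^2` there,
and the Weierstrass M-test gives summability and uniform convergence.
-/

namespace Real

theorem rpow_sub_rpow_le_div {p q r : ℝ} (hr : r ≤ 1) (hq : 0 < q) (hqp : q ≤ p) :
    p ^ r - q ^ r ≤ (p - q) / q ^ (1 - r) := by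
  have hp : 0 < p := hq.trans_le hqp
  rw [le_div_iff₀ (rpow_pos_of_pos hq _)]
  have hq_split : q ^ r * q ^ (1 - r) = q := by rw [← rpow_add hq]; simp
  have hp_split : p ^ r * p ^ (1 - r) = p := by rw [← rpow_add hp]; simp
  have hmono : p ^ r * q ^ (1 - r) ≤ p ^ r * p ^ (1 - r) :=
    mul_le_mul_of_nonneg_left (rpow_le_rpow hq.le hqp (by linarith)) (rpow_nonneg hp.le _)
  linarith

theorem abs_rpow_sub_rpow_le {p q r c : ℝ} (hr₀ : 0 ≤ r) (hr₁ : r ≤ 1) (hc : 0 < c)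
    (hp : c ≤ p) (hq : c ≤ q) : |p ^ r - q ^ r| ≤ |p - q| / c ^ (1 - r) := by
  wlog hqp : q ≤ p generalizing p q
  · rw [abs_sub_comm, abs_sub_comm p]
    exact this hq hp (le_of_not_ge hqp)
  have hq₀ : 0 < q := hc.trans_le hq
  rw [abs_of_nonneg (sub_nonneg.2 (rpow_le_rpow hq₀.le hqp hr₀)), abs_of_nonneg (by linarith)]
  calc p ^ r - q ^ r ≤ (p - q) / q ^ (1 - r) := rpow_sub_rpow_le_div hr₁ hq₀ hqp
    _ ≤ (p - q) / c ^ (1 - r) :=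
      div_le_div_of_nonneg_left (by linarith) (rpow_pos_of_pos hc _)
        (rpow_le_rpow hc.le hq (by linarith))

end Real

noncomputable def cubeRootIncrement (t : ℝ) : ℝ :=
  |t + 1| ^ ((1 : ℝ) / 3) - |t| ^ ((1 : ℝ) / 3)

theorem fmL_eq_cubeRootIncrement (L : ℝ) (m : ℤ) (x : ℝ) :
    fmL L m x = (cubeRootIncrement (x - m) - cubeRootIncrement (x - m - L)) ^ 3 := by
  rw [fmL, cubeRootIncrement, cubeRootIncrement, sub_add_eq_add_sub (x - m) L 1]
  ring

theorem abs_cubeRootIncrement_le {c t : ℝ} (hc : 0 < c) (ht : c + 1 ≤ |t|) :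
    |cubeRootIncrement t| ≤ 1 / c ^ ((2 : ℝ) / 3) := by
  have ht₁ : c ≤ |t + 1| := by
    have := abs_sub_abs_le_abs_sub t (-1)
    rw [sub_neg_eq_add, abs_neg, abs_one] at this
    linarith
  have hinc : |(|t + 1| - |t|)| ≤ 1 := by
    simpa using abs_abs_sub_abs_le_abs_sub (t + 1) t
  calc |cubeRootIncrement t| ≤ |(|t + 1| - |t|)| / c ^ (1 - (1 : ℝ) / 3) :=
        Real.abs_rpow_sub_rpow_le (by norm_num) (by norm_num) hc ht₁ (by linarith)
    _ ≤ 1 / c ^ ((2 : ℝ) / 3) := by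
        norm_num only
        exact div_le_div_of_nonneg_right hinc (Real.rpow_nonneg hc.le _)

theorem abs_fmL_le_of_add_one_le {L x c : ℝ} {m : ℤ} (hc : 0 < c)
    (h₁ : c + 1 ≤ |x - m|) (h₂ : c + 1 ≤ |x - m - L|) : |fmL L m x| ≤ 8 / c ^ 2 := by
  have hD : |cubeRootIncrement (x - m) - cubeRootIncrement (x - m - L)| ≤ 2 / c ^ ((2 : ℝ) / 3) :=
    calc _ ≤ |cubeRootIncrement (x - m)| + |cubeRootIncrement (x - m - L)| := abs_sub _ _
      _ ≤ 1 / c ^ ((2 : ℝ) / 3) + 1 / c ^ ((2 : ℝ) / 3) :=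
        add_le_add (abs_cubeRootIncrement_le hc h₁) (abs_cubeRootIncrement_le hc h₂)
      _ = 2 / c ^ ((2 : ℝ) / 3) := by ring
  have hcube : (c ^ ((2 : ℝ) / 3)) ^ 3 = c ^ 2 := by
    rw [← Real.rpow_mul_natCast hc.le]; norm_num
  calc |fmL L m x| = |cubeRootIncrement (x - m) - cubeRootIncrement (x - m - L)| ^ 3 := by
        rw [fmL_eq_cubeRootIncrement, abs_pow]
    _ ≤ (2 / c ^ ((2 : ℝ) / 3)) ^ 3 := pow_le_pow_left₀ (abs_nonneg _) hD 3
    _ = 8 / c ^ 2 := by rw [div_pow, hcube]; norm_num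

theorem abs_fmL_le_of_abs_le {L x r : ℝ} {m : ℤ} (hx : |x| ≤ r)
    (hm : 2 * (r + |L| + 1) ≤ |(m : ℝ)|) : |fmL L m x| ≤ 32 / (m : ℝ) ^ 2 := by
  have hr : 0 ≤ r := (abs_nonneg x).trans hx
  have hxm : |(m : ℝ)| - |x| ≤ |x - m| := by
    simpa [abs_sub_comm] using abs_sub_abs_le_abs_sub (m : ℝ) x
  have hxmL : |x - m| - |L| ≤ |x - m - L| := abs_sub_abs_le_abs_sub _ _
  calc |fmL L m x| ≤ 8 / (|(m : ℝ)| / 2) ^ 2 :=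
        abs_fmL_le_of_add_one_le (by linarith [abs_nonneg L]) (by linarith [abs_nonneg L])
          (by linarith)
    _ = 32 / (m : ℝ) ^ 2 := by rw [div_pow, sq_abs]; ring

theorem eventually_abs_fmL_le (L r : ℝ) :
    ∀ᶠ m : ℤ in cofinite, ∀ x, |x| ≤ r → ‖fmL L m x‖ ≤ 32 / (m : ℝ) ^ 2 := by
  have hm : ∀ᶠ m : ℤ in cofinite, 2 * (r + |L| + 1) ≤ ‖(m : ℝ)‖ :=
    (tendsto_norm_cocompact_atTop.comp Int.tendsto_coe_cofinite).eventually_ge_atTop _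
  filter_upwards [hm] with m hm x hx
  exact abs_fmL_le_of_abs_le hx hm

theorem summable_thirtyTwo_div_sq : Summable fun m : ℤ => 32 / (m : ℝ) ^ 2 := by
  simpa only [mul_one_div] using (Real.summable_one_div_int_pow.2 one_lt_two).mul_left (32 : ℝ)

theorem fL_summable_and_uniform_general (L : ℝ) :
    (∀ x : ℝ, Summable fun m : ℤ => fmL L m x) ∧
    TendstoUniformlyOn
      (fun (N : ℕ) (x : ℝ) => ∑ m ∈ Finset.Icc (-(N : ℤ)) (N : ℤ), fmL L m x)
      (fL L) atTop (Set.Icc 0 1) := by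
  refine ⟨fun x => ?_, fun v hv => ?_⟩
  · refine summable_thirtyTwo_div_sq.of_norm_bounded_eventually ?_
    filter_upwards [eventually_abs_fmL_le L |x|] with m hm using hm x le_rfl
  · have hbound : ∀ᶠ m : ℤ in cofinite, ∀ x ∈ Set.Icc (0 : ℝ) 1,
        ‖fmL L m x‖ ≤ 32 / (m : ℝ) ^ 2 := by
      filter_upwards [eventually_abs_fmL_le L 1] with m hm x hx
      exact hm x (abs_le.2 ⟨by linarith [hx.1], hx.2⟩)
    exact Finset.tendsto_Icc_neg.eventually
      (tendstoUniformlyOn_tsum_of_cofinite_eventually summable_thirtyTwo_div_sq hbound v hv)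

/-- For every `L > 0`, the family `(f_{m,L}(x))_{m ∈ ℤ}` is summable for every `x`, and
the symmetric partial sums `∑_{|m| ≤ N} f_{m,L}` converge uniformly on `[0,1]` to `f_L`. -/
theorem fL_summable_and_uniform (L : ℝ) (hL : 0 < L) :
    (∀ x : ℝ, Summable fun m : ℤ => fmL L m x) ∧
    TendstoUniformlyOn
      (fun (N : ℕ) (x : ℝ) => ∑ m ∈ Finset.Icc (-(N : ℤ)) (N : ℤ), fmL L m x)
      (fL L) atTop (Set.Icc 0 1) :=
  fL_summable_and_uniform_general L
end

section
/- For every $L > 0$ and every $m \in \mathbb{Z}$, the function $f_{m,L}$ is H\"older continuous of order $1/3$ on $\mathbb{R}$: there exists a constant $C > 0$ such that $|f_{m,L}(x) - f_{m,L}(y)| \le C |x - y|^{1/3}$ for all $x, y \in \mathbb{R}$. -/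
open Filter MeasureTheory

/-!
The cube root `g` of `f_{m,L}` is a signed sum of four functions `x ↦ |x - c|^{1/3}`, each of
which is `1/3`-Hölder with constant `1` because `t ↦ t^{1/3}` is subadditive on `[0, ∞)`.
Pairing the terms whose centres differ by `1` shows `|g| ≤ 2`, and then
`a³ - b³ = (a - b)(a² + ab + b²)` transfers the Hölder bound from `g` to `f_{m,L} = g³`.
-/

open Real

theorem abs_abs_rpow_sub_abs_rpow_le {p : ℝ} (hp : 0 ≤ p) (hp1 : p ≤ 1) (a b : ℝ) :
    |(|a| ^ p - |b| ^ p)| ≤ |a - b| ^ p := by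
  wlog h : |b| ≤ |a| generalizing a b
  · rw [abs_sub_comm, abs_sub_comm a b]
    exact this b a (le_of_not_ge h)
  have hsub : |a| ^ p ≤ |b| ^ p + |a - b| ^ p :=
    calc |a| ^ p ≤ (|b| + |a - b|) ^ p := by
          gcongr
          linarith [abs_sub_abs_le_abs_sub a b]
      _ ≤ |b| ^ p + |a - b| ^ p := rpow_add_le_add_rpow (abs_nonneg _) (abs_nonneg _) hp hp1
  rw [abs_of_nonneg (sub_nonneg.2 (rpow_le_rpow (abs_nonneg _) h hp))]
  linarith

noncomputable def fmLCbrt (L : ℝ) (m : ℤ) (x : ℝ) : ℝ :=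
  |x - m + 1| ^ ((1 : ℝ) / 3) + |x - m - L| ^ ((1 : ℝ) / 3)
    - |x - m| ^ ((1 : ℝ) / 3) - |x - m + 1 - L| ^ ((1 : ℝ) / 3)

theorem fmL_eq_fmLCbrt_pow (L : ℝ) (m : ℤ) (x : ℝ) : fmL L m x = fmLCbrt L m x ^ 3 := rfl

theorem abs_fmLCbrt_le_two (L : ℝ) (m : ℤ) (x : ℝ) : |fmLCbrt L m x| ≤ 2 := by
  have key : ∀ a b : ℝ, |a - b| = 1 → |(|a| ^ ((1 : ℝ) / 3) - |b| ^ ((1 : ℝ) / 3))| ≤ 1 :=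
    fun a b hab => by
      simpa [hab] using abs_abs_rpow_sub_abs_rpow_le (p := 1 / 3) (by norm_num) (by norm_num) a b
  have h₁ := key (x - m + 1) (x - m) (by ring_nf; exact abs_one)
  have h₂ := key (x - m - L) (x - m + 1 - L) (by ring_nf; norm_num)
  have hsplit : fmLCbrt L m x
      = (|x - m + 1| ^ ((1 : ℝ) / 3) - |x - m| ^ ((1 : ℝ) / 3))
        + (|x - m - L| ^ ((1 : ℝ) / 3) - |x - m + 1 - L| ^ ((1 : ℝ) / 3)) := by
    unfold fmLCbrt; ring
  rw [hsplit]
  linarith [abs_add_le (|x - m + 1| ^ ((1 : ℝ) / 3) - |x - m| ^ ((1 : ℝ) / 3))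
    (|x - m - L| ^ ((1 : ℝ) / 3) - |x - m + 1 - L| ^ ((1 : ℝ) / 3))]

theorem abs_fmLCbrt_sub_le (L : ℝ) (m : ℤ) (x y : ℝ) :
    |fmLCbrt L m x - fmLCbrt L m y| ≤ 4 * |x - y| ^ ((1 : ℝ) / 3) := by
  have key : ∀ a b : ℝ, a - b = x - y →
      |(|a| ^ ((1 : ℝ) / 3) - |b| ^ ((1 : ℝ) / 3))| ≤ |x - y| ^ ((1 : ℝ) / 3) :=
    fun a b hab => hab ▸ abs_abs_rpow_sub_abs_rpow_le (by norm_num) (by norm_num) a b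
  have h₁ := abs_le.1 (key (x - m + 1) (y - m + 1) (by ring))
  have h₂ := abs_le.1 (key (x - m - L) (y - m - L) (by ring))
  have h₃ := abs_le.1 (key (x - m) (y - m) (by ring))
  have h₄ := abs_le.1 (key (x - m + 1 - L) (y - m + 1 - L) (by ring))
  unfold fmLCbrt
  rw [abs_le]
  constructor <;> linarith [h₁.1, h₁.2, h₂.1, h₂.2, h₃.1, h₃.2, h₄.1, h₄.2]

theorem fmL_holder_general (L : ℝ) (m : ℤ) :
    ∃ C : ℝ, 0 < C ∧ ∀ x y : ℝ,
      |fmL L m x - fmL L m y| ≤ C * |x - y| ^ ((1 : ℝ) / 3) := by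
  refine ⟨48, by norm_num, fun x y => ?_⟩
  have hmax : max |fmLCbrt L m x| |fmLCbrt L m y| ≤ 2 :=
    max_le (abs_fmLCbrt_le_two L m x) (abs_fmLCbrt_le_two L m y)
  calc |fmL L m x - fmL L m y| = |fmLCbrt L m x ^ 3 - fmLCbrt L m y ^ 3| := by
        rw [fmL_eq_fmLCbrt_pow, fmL_eq_fmLCbrt_pow]
    _ ≤ |fmLCbrt L m x - fmLCbrt L m y| * 3 * max |fmLCbrt L m x| |fmLCbrt L m y| ^ 2 :=
        abs_pow_sub_pow_le _ _ 3
    _ ≤ (4 * |x - y| ^ ((1 : ℝ) / 3)) * 3 * 2 ^ 2 := by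
        gcongr
        exact abs_fmLCbrt_sub_le L m x y
    _ = 48 * |x - y| ^ ((1 : ℝ) / 3) := by ring

/-- For every `L > 0` and `m ∈ ℤ`, the function `f_{m,L}` is Hölder continuous of order `1/3`
on `ℝ`. -/
theorem fmL_holder (L : ℝ) (hL : 0 < L) (m : ℤ) :
    ∃ C : ℝ, 0 < C ∧ ∀ x y : ℝ,
      |fmL L m x - fmL L m y| ≤ C * |x - y| ^ ((1 : ℝ) / 3) :=
  fmL_holder_general L m
end

section
/- Let $(a_n)$ and $(b_n)$ be strictly increasing sequences of positive integers, let $L = p/q$ with $p, q \in \mathbb{N}$ relatively prime, set $L_n = b_n/a_n$ and $\delta_n = L_n - L$, and suppose $L_n \ne L$ for all but finitely many $n$ and $c_n = \gcd(a_n, b_n) \to \infty$. Then $a_n |\delta_n| \to \infty$ as $n \to \infty$. -/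
open Filter

/-!
Clearing denominators, `a * |b / a - p / q| = |q b - p a| / q`. The integer `q b - p a` is divisible
by `gcd a b`, and it is nonzero as long as `b / a ≠ p / q`, so it is at least `gcd a b` in absolute
value. Hence `a_n |δ_n| ≥ c_n / q → ∞`.
-/

lemma mul_abs_div_sub_div {a b p q : ℝ} (ha : 0 < a) (hq : 0 < q) :
    a * |b / a - p / q| = |q * b - p * a| / q := by
  calc a * |b / a - p / q| = |a * (b / a - p / q)| := by rw [abs_mul, abs_of_pos ha]
    _ = |(q * b - p * a) / q| := by congr 1; field_simp
    _ = |q * b - p * a| / q := by rw [abs_div, abs_of_pos hq]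

lemma gcd_le_abs_mul_sub_mul {a b p q : ℕ} (h : q * b ≠ p * a) :
    (Nat.gcd a b : ℤ) ≤ |(q : ℤ) * b - p * a| := by
  have hdvd : (Nat.gcd a b : ℤ) ∣ (q : ℤ) * b - p * a :=
    dvd_sub (dvd_mul_of_dvd_right (Int.natCast_dvd_natCast.mpr (Nat.gcd_dvd_right a b)) _)
      (dvd_mul_of_dvd_right (Int.natCast_dvd_natCast.mpr (Nat.gcd_dvd_left a b)) _)
  have hne : (q : ℤ) * b - p * a ≠ 0 := sub_ne_zero.mpr (by exact_mod_cast h)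
  exact Int.le_of_dvd (abs_pos.mpr hne) ((dvd_abs _ _).mpr hdvd)

lemma gcd_div_le_mul_abs_div_sub_div {a b p q : ℕ} (ha : 0 < a) (hq : 0 < q)
    (h : (b : ℝ) / a ≠ (p : ℝ) / q) :
    (Nat.gcd a b : ℝ) / q ≤ a * |(b : ℝ) / a - (p : ℝ) / q| := by
  have hcross : q * b ≠ p * a := fun hqb => h <| by
    rw [div_eq_div_iff (by positivity) (by positivity)]
    exact_mod_cast (mul_comm b q).trans hqb
  rw [mul_abs_div_sub_div (by positivity) (by positivity)]
  gcongr
  exact_mod_cast gcd_le_abs_mul_sub_mul hcross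

theorem an_deltan_tendsto_atTop_general (a b : ℕ → ℕ)
    (ha0 : ∀ n, 0 < a n)
    (p q : ℕ) (hq : 0 < q)
    (L : ℝ) (hL : L = (p : ℝ) / (q : ℝ))
    (hne : ∀ᶠ n in atTop, (b n : ℝ) / (a n : ℝ) ≠ L)
    (hgcd : Tendsto (fun n => Nat.gcd (a n) (b n)) atTop atTop) :
    Tendsto (fun n => (a n : ℝ) * |(b n : ℝ) / (a n : ℝ) - L|) atTop atTop := by
  subst hL
  have hlower : Tendsto (fun n => (Nat.gcd (a n) (b n) : ℝ) / q) atTop atTop :=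
    (tendsto_natCast_atTop_atTop.comp hgcd).atTop_div_const (by positivity)
  refine tendsto_atTop_mono' atTop ?_ hlower
  filter_upwards [hne] with n hn
  exact gcd_div_le_mul_abs_div_sub_div (ha0 n) hq hn

/-- For strictly increasing sequences of positive integers `(a_n)`, `(b_n)` and `L = p/q`
in lowest terms, with `L_n = b_n/a_n` and `δ_n = L_n - L`: if `L_n ≠ L` for all but finitely
many `n` and `c_n = gcd(a_n, b_n) → ∞`, then `a_n|δ_n| → ∞`. -/
theorem an_deltan_tendsto_atTop (a b : ℕ → ℕ) (ha : StrictMono a) (hb : StrictMono b)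
    (ha0 : ∀ n, 0 < a n) (hb0 : ∀ n, 0 < b n)
    (p q : ℕ) (hp : 0 < p) (hq : 0 < q) (hpq : Nat.Coprime p q)
    (L : ℝ) (hL : L = (p : ℝ) / (q : ℝ))
    (hne : ∀ᶠ n in atTop, (b n : ℝ) / (a n : ℝ) ≠ L)
    (hgcd : Tendsto (fun n => Nat.gcd (a n) (b n)) atTop atTop) :
    Tendsto (fun n => (a n : ℝ) * |(b n : ℝ) / (a n : ℝ) - L|) atTop atTop :=
  an_deltan_tendsto_atTop_general a b ha0 p q hq L hL hne hgcd
end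

section
/- Let $(a_n)$ and $(b_n)$ be strictly increasing sequences of positive integers such that $L_n = b_n/a_n \to L \in (0, \infty)$, and suppose there exists $k \in \mathbb{N}$ such that $b_n \equiv k \pmod{a_n}$ for all $n$. Then $L \in \mathbb{N}$, and $|b_n - a_n L| = k$ for all but finitely many $n$. -/
/-! Write `b_n = a_n q_n + k` with `q_n = ⌊b_n / a_n⌋`. Since `a_n → ∞`, the integers
`q_n = L_n - k / a_n` converge to `L`, so they are eventually equal to a constant `M = L`,
and then `b_n - a_n L = k`. -/

open Filter Topology

theorem exists_nat_eq_and_eventually_eq_of_tendsto_natCast {ι : Type*} {l : Filter ι} [l.NeBot]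
    {q : ι → ℕ} {L : ℝ} (h : Tendsto (fun i => (q i : ℝ)) l (𝓝 L)) :
    ∃ M : ℕ, L = M ∧ ∀ᶠ i in l, q i = M := by
  obtain ⟨M, rfl⟩ : L ∈ Set.range ((↑) : ℕ → ℝ) :=
    Nat.isClosedEmbedding_coe_real.isClosed_range.mem_of_tendsto h (.of_forall fun i => ⟨q i, rfl⟩)
  have hq : Tendsto q l (𝓝 M) := Nat.isClosedEmbedding_coe_real.isInducing.tendsto_nhds_iff.mpr h
  rw [nhds_discrete, tendsto_pure] at hq
  exact ⟨M, rfl, hq⟩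

theorem tendsto_natCast_div_of_mod_eq {ι : Type*} {l : Filter ι} {a b : ι → ℕ} {k : ℕ} {L : ℝ}
    (ha : Tendsto a l atTop) (hk : ∀ i, b i % a i = k)
    (h : Tendsto (fun i => (b i : ℝ) / a i) l (𝓝 L)) :
    Tendsto (fun i => ((b i / a i : ℕ) : ℝ)) l (𝓝 L) := by
  have ha' : Tendsto (fun i => (a i : ℝ)) l atTop := tendsto_natCast_atTop_atTop.comp ha
  have hdiff := h.sub (tendsto_const_nhds (x := (k : ℝ)).div_atTop ha')
  rw [sub_zero] at hdiff
  refine hdiff.congr' ?_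
  filter_upwards [ha.eventually_ne_atTop 0] with i hi
  have hb : (b i : ℝ) = a i * (b i / a i : ℕ) + k := by
    rw [← hk i]; exact_mod_cast (Nat.div_add_mod (b i) (a i)).symm
  rw [hb]
  field_simp
  ring

theorem mod_case_L_nat_general (a b : ℕ → ℕ) (ha : StrictMono a)
    (L : ℝ)
    (hconv : Tendsto (fun n => (b n : ℝ) / (a n : ℝ)) atTop (nhds L))
    (k : ℕ) (hk : ∀ n, b n % a n = k) :
    (∃ M : ℕ, L = (M : ℝ)) ∧
      (∀ᶠ n in atTop, |(b n : ℝ) - (a n : ℝ) * L| = (k : ℝ)) := by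
  obtain ⟨M, rfl, hq⟩ := exists_nat_eq_and_eventually_eq_of_tendsto_natCast
    (tendsto_natCast_div_of_mod_eq ha.tendsto_atTop hk hconv)
  refine ⟨⟨M, rfl⟩, hq.mono fun n hqn => ?_⟩
  have hb : (b n : ℝ) = a n * M + k := by
    rw [← hqn, ← hk n]; exact_mod_cast (Nat.div_add_mod (b n) (a n)).symm
  rw [hb, add_sub_cancel_left, abs_of_nonneg k.cast_nonneg]

/-- If `(a_n)`, `(b_n)` are strictly increasing sequences of positive integers with
`L_n = b_n/a_n → L ∈ (0,∞)`, and `b_n ≡ k (mod a_n)` for all `n`, then `L ∈ ℕ` and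
`|b_n - a_n L| = k` for all but finitely many `n`. -/
theorem mod_case_L_nat (a b : ℕ → ℕ) (ha : StrictMono a) (hb : StrictMono b)
    (ha0 : ∀ n, 0 < a n) (hb0 : ∀ n, 0 < b n)
    (L : ℝ) (hLpos : 0 < L)
    (hconv : Tendsto (fun n => (b n : ℝ) / (a n : ℝ)) atTop (nhds L))
    (k : ℕ) (hk : ∀ n, b n % a n = k) :
    (∃ M : ℕ, L = (M : ℝ)) ∧
      (∀ᶠ n in atTop, |(b n : ℝ) - (a n : ℝ) * L| = (k : ℝ)) :=
  mod_case_L_nat_general a b ha L hconv k hk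
end

section
/- Let $(a_n)$ and $(b_n)$ be strictly increasing sequences of positive integers with $L_n = b_n/a_n \to L = p/q$, where $p, q \in \mathbb{N}$ are relatively prime, and set $\delta_n = L_n - L$. Suppose $\delta_n \ne 0$ for all sufficiently large $n$ and $a_n |\delta_n| \to k$, where $k \in (0, \infty)$ or $k = \infty$. Then for every $m \in \mathbb{Z}$ and every $t > 0$, the difference $\frac{1}{a_n} \sum_{j=1}^{\lfloor a_n t \rfloor} \widehat{f}_{m,L}(j L_n) \; - \; \frac{1}{q} \sum_{\eta=1}^{q} \frac{1}{a_n |\delta_n|} \int_0^{a_n |\delta_n| t} \widehat{f}_{m,L}(\eta L + \operatorname{sgn}(\delta_n) x)\, dx$ converges to $0$ as $n \to \infty$. -/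
/-!
Write `j = η + q r` with `1 ≤ η ≤ q`. Since `q L = p` is an integer,
`f̂(j L_n) = f̂(η L + sgn(δ_n) (η + q r) |δ_n|)`, so for each residue `η` the sum over `j` is a
Riemann sum with step `q |δ_n|` of `x ↦ f̂(η L + sgn(δ_n) x)` on `[0, a_n |δ_n| t]`.
As `f_{m,L}` is uniformly continuous on `[0, 1]`, this function oscillates little on every cell
whose image avoids the integers, and at most `length + 1` cells meet an integer. Normalised by
`q a_n |δ_n|`, the error is at most `t ε + C |δ_n|` once `q |δ_n|` is small, because
`a_n |δ_n|` stays bounded away from `0`; and `δ_n → 0`.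
-/

open Filter MeasureTheory

/-- `f̂_{m,L}(x) = f_{m,L}({x})`, where `{x}` is the fractional part of `x`. -/
noncomputable def fmLhat (L : ℝ) (m : ℤ) (x : ℝ) : ℝ := fmL L m (Int.fract x)

open Finset

theorem Finset.sum_Icc_eq_sum_residues {M : Type*} [AddCommMonoid M] {q : ℕ} (hq : 0 < q)
    (n : ℕ) (f : ℕ → M) :
    ∑ j ∈ Icc 1 n, f j = ∑ η ∈ Icc 1 q, ∑ r ∈ range ((n + q - η) / q), f (η + q * r) := by
  have hmem : ∀ η r, 1 ≤ η → η ≤ q → (r < (n + q - η) / q ↔ η + q * r ≤ n) := by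
    intro η r h1 h2
    rw [← Nat.add_one_le_iff, Nat.le_div_iff_mul_le hq, add_one_mul, mul_comm]
    omega
  rw [sum_sigma']
  refine sum_nbij' (fun j => ⟨(j - 1) % q + 1, (j - 1) / q⟩) (fun x => x.1 + q * x.2)
    ?_ ?_ ?_ ?_ ?_ <;> simp only [mem_Icc, mem_sigma, mem_range]
  · intro j hj
    have := Nat.mod_lt (j - 1) hq
    have := Nat.mod_add_div (j - 1) q
    exact ⟨by omega, (hmem _ _ (by omega) (by omega)).2 (by omega)⟩
  · rintro ⟨η, r⟩ ⟨hη, hr⟩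
    dsimp only at hη hr ⊢
    have := (hmem η r hη.1 hη.2).1 hr
    omega
  · intro j hj
    have := Nat.mod_add_div (j - 1) q
    omega
  · rintro ⟨η, r⟩ ⟨hη, -⟩
    dsimp only at hη ⊢
    have e : η + q * r - 1 = (η - 1) + q * r := by omega
    simp only [e, Nat.add_mul_mod_self_left, Nat.mod_eq_of_lt (show η - 1 < q by omega),
      Nat.add_mul_div_left _ _ hq, Nat.div_eq_of_lt (show η - 1 < q by omega),
      Nat.sub_add_cancel hη.1, Nat.zero_add]
  · intro j hj
    have := Nat.mod_add_div (j - 1) q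
    congr 1
    omega

theorem Finset.sum_Icc_one_eq_sum_Icc_toNat {M : Type*} [AddCommMonoid M] (J : ℤ) (f : ℤ → M) :
    ∑ j ∈ Icc 1 J, f j = ∑ j ∈ Icc 1 J.toNat, f j :=
  sum_nbij' Int.toNat (↑) (by intro j; simp; omega) (by intro j; simp; omega)
    (by intro j; simp; omega) (by intro j; simp) (by intro j; simp; intros; congr 1; omega)

theorem Int.floor_eq_of_mem_uIcc {R : Type*} [Ring R] [LinearOrder R] [IsStrictOrderedRing R]
    [FloorRing R] {a b y : R} (hy : y ∈ Set.uIcc a b) (hab : ⌊a⌋ = ⌊b⌋) : ⌊y⌋ = ⌊a⌋ := by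
  rcases Set.mem_uIcc.1 hy with ⟨h1, h2⟩ | ⟨h1, h2⟩
  · exact le_antisymm (hab ▸ Int.floor_mono h2) (Int.floor_mono h1)
  · exact le_antisymm (Int.floor_mono h2) (hab ▸ Int.floor_mono h1)

theorem abs_floor_sub_floor_lt (a b : ℝ) : ((|⌊a⌋ - ⌊b⌋| : ℤ) : ℝ) < |a - b| + 1 := by
  have := Int.floor_le a; have := Int.lt_floor_add_one a
  have := Int.floor_le b; have := Int.lt_floor_add_one b
  push_cast
  rw [abs_sub_lt_iff]
  constructor <;> linarith [le_abs_self (a - b), neg_abs_le (a - b)]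

theorem card_filter_ne_succ_le_of_monotone {u : ℕ → ℤ} (hu : Monotone u) (N : ℕ) :
    (#{r ∈ range N | u r ≠ u (r + 1)} : ℤ) ≤ u N - u 0 := by
  induction N with
  | zero => simp
  | succ N ih =>
    have hstep := hu N.le_succ
    rw [range_add_one, filter_insert]
    split_ifs with hN
    · rw [card_insert_of_notMem (by simp)]
      push_cast
      have : u N < u (N + 1) := lt_of_le_of_ne hstep hN
      linarith
    · linarith

theorem card_filter_ne_succ_le_abs {u : ℕ → ℤ} (hu : Monotone u ∨ Antitone u) (N : ℕ) :
    (#{r ∈ range N | u r ≠ u (r + 1)} : ℤ) ≤ |u N - u 0| := by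
  rcases hu with hu | hu
  · exact (card_filter_ne_succ_le_of_monotone hu N).trans (le_abs_self _)
  · have := card_filter_ne_succ_le_of_monotone (u := fun r => -u r) hu.neg N
    simp only [ne_eq, neg_inj] at this
    linarith [neg_abs_le (u N - u 0)]

section RiemannSum

variable {h : ℝ → ℝ} {M : ℝ}

theorem abs_intervalIntegral_le (hM : ∀ x, |h x| ≤ M) (a b : ℝ) :
    |∫ x in a..b, h x| ≤ M * |b - a| := by
  simpa only [Real.norm_eq_abs] using
    intervalIntegral.norm_integral_le_of_norm_le_const (f := h) fun x _ => hM x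

theorem abs_intervalIntegral_sub_le (hint : ∀ a b, IntervalIntegrable h volume a b)
    (hM : ∀ x, |h x| ≤ M) (a b c d : ℝ) :
    |(∫ x in a..b, h x) - ∫ x in c..d, h x| ≤ M * (|c - a| + |d - b|) := by
  rw [intervalIntegral.integral_interval_sub_interval_comm (hint a b) (hint c d) (hint a c)]
  calc _ ≤ |∫ x in a..c, h x| + |∫ x in b..d, h x| := abs_sub _ _
    _ ≤ M * |c - a| + M * |d - b| :=
      add_le_add (abs_intervalIntegral_le hM a c) (abs_intervalIntegral_le hM b d)
    _ = M * (|c - a| + |d - b|) := by ring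

theorem abs_riemannSum_sub_integral_le (hint : ∀ a b, IntervalIntegrable h volume a b)
    (hM : ∀ x, |h x| ≤ M) {ε s c : ℝ} (hε : 0 ≤ ε) (hs : 0 ≤ s) (bad : ℕ → Prop)
    [DecidablePred bad]
    (hgood : ∀ r : ℕ, ¬ bad r → ∀ x ∈ Set.Icc (c + r * s) (c + r * s + s),
      |h x - h (c + r * s)| ≤ ε) (N : ℕ) :
    |s * ∑ r ∈ range N, h (c + r * s) - ∫ x in c..c + N * s, h x| ≤
      N * s * ε + #{r ∈ range N | bad r} * (2 * M * s) := by
  have cell : ∀ r : ℕ, |s * h (c + r * s) - ∫ x in c + r * s..c + (r + 1 : ℕ) * s, h x| ≤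
      s * ε + if bad r then 2 * M * s else 0 := by
    intro r
    set u := c + r * s
    have hend : c + (r + 1 : ℕ) * s = u + s := by push_cast; ring
    have hconst : s * h u = ∫ _ in u..u + s, h u := by simp
    rw [hend, hconst, ← intervalIntegral.integral_sub intervalIntegrable_const (hint _ _)]
    refine (intervalIntegral.norm_integral_le_of_norm_le_const
      (f := fun x => h u - h x) (C := ε + if bad r then 2 * M else 0) fun x hx => ?_).trans_eq ?_
    · rw [Set.uIoc_of_le (by linarith)] at hx
      rw [Real.norm_eq_abs, abs_sub_comm]
      split_ifs with hr
      · linarith [abs_sub (h x) (h u), hM x, hM u]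
      · simpa using hgood r hr x (Set.Ioc_subset_Icc_self hx)
    · rw [add_sub_cancel_left, abs_of_nonneg hs]
      split_ifs <;> ring
  have hsplit := intervalIntegral.sum_integral_adjacent_intervals (μ := volume) (f := h)
    (a := fun r : ℕ => c + r * s) (n := N) fun k _ => hint _ _
  simp only [Nat.cast_zero, zero_mul, add_zero] at hsplit
  rw [← hsplit, mul_sum, ← sum_sub_distrib]
  calc _ ≤ ∑ r ∈ range N, (s * ε + if bad r then 2 * M * s else 0) :=
        (abs_sum_le_sum_abs _ _).trans (sum_le_sum fun r _ => cell r)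
    _ = _ := by
      rw [sum_add_distrib, ← sum_filter, sum_const, sum_const, card_range, nsmul_eq_mul,
        nsmul_eq_mul]
      ring

end RiemannSum

section CompFract

variable {F : ℝ → ℝ} {M ε δ θ σ s : ℝ}

theorem abs_comp_fract_sub_le
    (hF : ∀ x ∈ Set.Icc (0 : ℝ) 1, ∀ y ∈ Set.Icc (0 : ℝ) 1, |x - y| ≤ δ → |F x - F y| ≤ ε)
    (hσ : |σ| = 1) (hsδ : s ≤ δ) {u x : ℝ} (hx : x ∈ Set.Icc u (u + s))
    (hfl : ⌊θ + σ * u⌋ = ⌊θ + σ * (u + s)⌋) :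
    |F (Int.fract (θ + σ * x)) - F (Int.fract (θ + σ * u))| ≤ ε := by
  have hmem : θ + σ * x ∈ Set.uIcc (θ + σ * u) (θ + σ * (u + s)) := by
    rw [Set.mem_uIcc]
    rcases (abs_eq zero_le_one).1 hσ with rfl | rfl
    · left; constructor <;> linarith [hx.1, hx.2]
    · right; constructor <;> linarith [hx.1, hx.2]
  have hfract : Int.fract (θ + σ * x) - Int.fract (θ + σ * u) = σ * (x - u) := by
    rw [Int.fract, Int.fract, Int.floor_eq_of_mem_uIcc hmem hfl]
    ring
  refine hF _ ⟨Int.fract_nonneg _, (Int.fract_lt_one _).le⟩ _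
    ⟨Int.fract_nonneg _, (Int.fract_lt_one _).le⟩ ?_
  rw [hfract, abs_mul, hσ, one_mul, abs_of_nonneg (by linarith [hx.1])]
  linarith [hx.2]

theorem card_floor_jumps_le (hσ : |σ| = 1) (hs : 0 ≤ s) (θ c : ℝ) (N : ℕ) :
    ((#{r ∈ range N | ⌊θ + σ * (c + (r : ℕ) * s)⌋ ≠ ⌊θ + σ * (c + r * s + s)⌋} : ℕ) : ℝ) ≤
      N * s + 1 := by
  set u : ℕ → ℤ := fun r => ⌊θ + σ * (c + r * s)⌋
  have hsucc : ∀ r : ℕ, ⌊θ + σ * (c + r * s + s)⌋ = u (r + 1) := by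
    intro r; simp only [u]; push_cast; ring_nf
  have hmono : Monotone u ∨ Antitone u := by
    rcases (abs_eq zero_le_one).1 hσ with rfl | rfl
    · exact Or.inl fun i j hij => Int.floor_mono (by gcongr)
    · exact Or.inr fun i j hij => Int.floor_mono (by simp only [neg_mul, one_mul]; gcongr)
  simp_rw [hsucc]
  have hcard := card_filter_ne_succ_le_abs hmono N
  calc ((#{r ∈ range N | u r ≠ u (r + 1)} : ℕ) : ℝ)
        = ((#{r ∈ range N | u r ≠ u (r + 1)} : ℤ) : ℝ) := by norm_cast
    _ ≤ ((|u N - u 0| : ℤ) : ℝ) := by exact_mod_cast hcard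
    _ ≤ |θ + σ * (c + N * s) - (θ + σ * (c + (0 : ℕ) * s))| + 1 :=
        (abs_floor_sub_floor_lt _ _).le
    _ = N * s + 1 := by
        rw [Nat.cast_zero, zero_mul, add_zero, add_sub_add_left_eq_sub, ← mul_sub, abs_mul, hσ,
          add_sub_cancel_left, one_mul, abs_of_nonneg (by positivity)]

theorem abs_riemannSum_comp_fract_sub_integral_le (hFm : Measurable F)
    (hM : ∀ x ∈ Set.Icc (0 : ℝ) 1, |F x| ≤ M)
    (hF : ∀ x ∈ Set.Icc (0 : ℝ) 1, ∀ y ∈ Set.Icc (0 : ℝ) 1, |x - y| ≤ δ → |F x - F y| ≤ ε)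
    (hε : 0 ≤ ε) (hσ : |σ| = 1) (hs : 0 ≤ s) (hsδ : s ≤ δ) {c T : ℝ} {N : ℕ}
    (hc : 0 ≤ c) (hcs : c ≤ s) (hT : T ≤ c + N * s) (hTs : c + N * s ≤ T + s) :
    |s * ∑ r ∈ range N, F (Int.fract (θ + σ * (c + r * s))) -
        ∫ x in (0 : ℝ)..T, F (Int.fract (θ + σ * x))| ≤
      (T + s) * ε + (T + s + 2) * (2 * M * s) := by
  set h : ℝ → ℝ := fun x => F (Int.fract (θ + σ * x))
  have hbound : ∀ x, |h x| ≤ M := fun x => hM _ ⟨Int.fract_nonneg _, (Int.fract_lt_one _).le⟩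
  have hM0 : 0 ≤ M := (abs_nonneg _).trans (hbound 0)
  have hint : ∀ a b, IntervalIntegrable h volume a b := fun a b =>
    intervalIntegrable_const.mono_fun' (by fun_prop) (ae_of_all _ hbound)
  have hriemann := abs_riemannSum_sub_integral_le hint hbound hε hs
    (fun r : ℕ => ⌊θ + σ * (c + r * s)⌋ ≠ ⌊θ + σ * (c + r * s + s)⌋)
    (fun r hr x hx => abs_comp_fract_sub_le hF hσ hsδ hx (not_not.1 hr)) N
  have hcount := card_floor_jumps_le hσ hs θ c N
  have hends : |(∫ x in c..c + N * s, h x) - ∫ x in (0 : ℝ)..T, h x| ≤ M * (2 * s) := by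
    refine (abs_intervalIntegral_sub_le hint hbound c (c + N * s) 0 T).trans ?_
    rw [zero_sub, abs_neg, abs_of_nonneg hc, abs_sub_comm, abs_of_nonneg (by linarith)]
    gcongr
    linarith
  calc _ ≤ |s * ∑ r ∈ range N, h (c + r * s) - ∫ x in c..c + N * s, h x| +
        |(∫ x in c..c + N * s, h x) - ∫ x in (0 : ℝ)..T, h x| := abs_sub_le _ _ _
    _ ≤ (N * s * ε + (N * s + 1) * (2 * M * s)) + M * (2 * s) :=
        add_le_add (hriemann.trans (by gcongr)) hends
    _ ≤ (T + s) * ε + (T + s + 2) * (2 * M * s) := by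
        have hNs : N * s ≤ T + s := by linarith
        nlinarith [mul_le_mul_of_nonneg_right hNs hε, mul_nonneg hM0 hs]

end CompFract

theorem Real.sign_mul_abs (x : ℝ) : Real.sign x * |x| = x := by
  rcases lt_trichotomy x 0 with h | rfl | h
  · rw [Real.sign_of_neg h, abs_of_neg h, neg_one_mul, neg_neg]
  · simp
  · rw [Real.sign_of_pos h, abs_of_pos h, one_mul]

theorem Real.abs_sign_of_ne_zero {x : ℝ} (hx : x ≠ 0) : |Real.sign x| = 1 := by
  rcases Real.sign_apply_eq_of_ne_zero x hx with h | h <;> simp [h]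

theorem fmL_continuous (L : ℝ) (m : ℤ) : Continuous (fmL L m) := by
  unfold fmL
  fun_prop (disch := norm_num)

theorem fmLhat_add_intCast (L : ℝ) (m : ℤ) (x : ℝ) (k : ℤ) :
    fmLhat L m (x + k) = fmLhat L m x := by
  simp [fmLhat]

theorem fmLhat_natCast_mul_add {p q : ℕ} (hq : 0 < q) {L : ℝ} (hL : L = p / q) (m : ℤ)
    (e : ℝ) (η r : ℕ) :
    fmLhat L m ((((η + q * r : ℕ) : ℤ) : ℝ) * (L + e)) =
      fmLhat L m (η * L + Real.sign e * (η * |e| + r * (q * |e|))) := by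
  -- `q r L = r p` is an integer, which the period `1` of `f̂` absorbs.
  have hrp : (((η + q * r : ℕ) : ℤ) : ℝ) * (L + e) =
      η * L + Real.sign e * (η * |e| + r * (q * |e|)) + ((r * p : ℕ) : ℤ) := by
    have hq' : (q : ℝ) ≠ 0 := by positivity
    have := Real.sign_mul_abs e
    subst hL
    push_cast
    field_simp
    linear_combination (-(q : ℝ) * η - (q : ℝ) ^ 2 * r) * this
  rw [hrp, fmLhat_add_intCast]

theorem Nat.lt_add_mul_div_le_add {q : ℕ} (hq : 0 < q) (K : ℕ) {η : ℕ} (hη : η ≤ q) :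
    K < η + q * ((K + q - η) / q) ∧ η + q * ((K + q - η) / q) ≤ K + q := by
  have := Nat.div_add_mod (K + q - η) q
  have := Nat.mod_lt (K + q - η) hq
  omega

theorem sum_fmLhat_sub_integral_eq {p q : ℕ} (hq : 0 < q) {L : ℝ} (hL : L = p / q) (m : ℤ)
    {an e t : ℝ} (han : an ≠ 0) (he : |e| ≠ 0) :
    (1 / an) * ∑ j ∈ Icc (1 : ℤ) ⌊an * t⌋, fmLhat L m (j * (L + e)) -
        (1 / q) * ∑ η ∈ Icc 1 q, (1 / (an * |e|)) *
          ∫ x in (0 : ℝ)..(an * |e| * t), fmLhat L m (η * L + Real.sign e * x) =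
      1 / (q * (an * |e|)) * ∑ η ∈ Icc 1 q,
        (q * |e| * ∑ r ∈ range ((⌊an * t⌋.toNat + q - η) / q),
            fmLhat L m (η * L + Real.sign e * (η * |e| + r * (q * |e|))) -
          ∫ x in (0 : ℝ)..(an * |e| * t), fmLhat L m (η * L + Real.sign e * x)) := by
  have hcoef : ∀ X Y : ℝ, 1 / an * X - 1 / q * (1 / (an * |e|) * Y) =
      1 / (q * (an * |e|)) * (q * |e| * X - Y) := by
    intro X Y
    field_simp
  rw [sum_Icc_one_eq_sum_Icc_toNat, sum_Icc_eq_sum_residues hq, mul_sum, mul_sum, mul_sum,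
    ← sum_sub_distrib]
  refine sum_congr rfl fun η _ => ?_
  simp_rw [fmLhat_natCast_mul_add hq hL]
  exact hcoef _ _

theorem abs_sum_fmLhat_sub_integral_le {p q : ℕ} (hq : 0 < q) {L : ℝ} (hL : L = p / q) {m : ℤ}
    {M ε δ : ℝ} (hM : ∀ x ∈ Set.Icc (0 : ℝ) 1, |fmL L m x| ≤ M)
    (hF : ∀ x ∈ Set.Icc (0 : ℝ) 1, ∀ y ∈ Set.Icc (0 : ℝ) 1, |x - y| ≤ δ →
      |fmL L m x - fmL L m y| ≤ ε)
    (hε : 0 ≤ ε) {an Lp t : ℝ} (ht : 0 < t) (hA : 0 < an * |Lp - L|)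
    (hsδ : q * |Lp - L| ≤ δ) :
    |(1 / an) * ∑ j ∈ Icc (1 : ℤ) ⌊an * t⌋, fmLhat L m (j * Lp) -
        (1 / q) * ∑ η ∈ Icc 1 q, (1 / (an * |Lp - L|)) *
          ∫ x in (0 : ℝ)..(an * |Lp - L| * t), fmLhat L m (η * L + Real.sign (Lp - L) * x)| ≤
      t * ε +
        (2 * M * q * t + q * (ε + 2 * M * (q * |Lp - L| + 2)) / (an * |Lp - L|)) * |Lp - L| := by
  obtain ⟨e, rfl⟩ : ∃ e, Lp = L + e := ⟨Lp - L, by ring⟩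
  rw [add_sub_cancel_left] at hA hsδ ⊢
  set d := |e|
  set s := q * d
  set T := an * d * t
  set K := ⌊an * t⌋₊
  obtain ⟨han, hd⟩ : 0 < an ∧ 0 < d :=
    (pos_and_pos_or_neg_and_neg_of_mul_pos hA).resolve_right fun h => (abs_nonneg e).not_gt h.2
  have hσ : |Real.sign e| = 1 := Real.abs_sign_of_ne_zero (abs_pos.1 hd)
  have hK : ⌊an * t⌋.toNat = K := Int.floor_toNat _
  have hresidue : ∀ η ∈ Icc 1 q,
      |s * ∑ r ∈ range ((K + q - η) / q), fmLhat L m (η * L + Real.sign e * (η * d + r * s)) -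
        ∫ x in (0 : ℝ)..T, fmLhat L m (η * L + Real.sign e * x)| ≤
      (T + s) * ε + (T + s + 2) * (2 * M * s) := by
    intro η hη
    have hηq : η ≤ q := (mem_Icc.1 hη).2
    obtain ⟨hlo, hhi⟩ := Nat.lt_add_mul_div_le_add hq K hηq
    have hK0 : (K : ℝ) ≤ an * t := Nat.floor_le (by positivity)
    have hK1 : an * t < K + 1 := Nat.lt_floor_add_one _
    have hlo' : (K : ℝ) + 1 ≤ η + q * ((K + q - η) / q : ℕ) := by exact_mod_cast hlo
    have hhi' : (η : ℝ) + q * ((K + q - η) / q : ℕ) ≤ K + q := by exact_mod_cast hhi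
    refine abs_riemannSum_comp_fract_sub_integral_le (fmL_continuous L m).measurable hM hF hε
      hσ (by positivity) hsδ (by positivity) ?_ ?_ ?_
    · exact mul_le_mul_of_nonneg_right (by exact_mod_cast hηq) hd.le
    · simp only [T, s]; nlinarith
    · simp only [T, s]; nlinarith
  rw [sum_fmLhat_sub_integral_eq hq hL m han.ne' hd.ne', hK, abs_mul,
    abs_of_pos (by positivity)]
  calc _ ≤ 1 / (q * (an * d)) * ∑ η ∈ Icc 1 q, ((T + s) * ε + (T + s + 2) * (2 * M * s)) := by
        gcongr
        exact (abs_sum_le_sum_abs _ _).trans (sum_le_sum hresidue)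
    _ = _ := by
        rw [sum_const, Nat.card_Icc, Nat.add_sub_cancel, nsmul_eq_mul]
        simp only [s, T]
        field_simp
        ring

theorem exists_pos_eventually_le_of_tendsto {ι : Type*} {l : Filter ι} {f : ι → ℝ}
    (h : (∃ k : ℝ, 0 < k ∧ Tendsto f l (nhds k)) ∨ Tendsto f l atTop) :
    ∃ c > 0, ∀ᶠ n in l, c ≤ f n := by
  rcases h with ⟨k, hk, hf⟩ | hf
  · exact ⟨k / 2, by positivity, hf.eventually (eventually_ge_nhds (by linarith))⟩
  · exact ⟨1, one_pos, hf.eventually_ge_atTop 1⟩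

theorem tendsto_zero_of_forall_eventually_abs_le {ι : Type*} {l : Filter ι} {E d : ι → ℝ}
    (hd : Tendsto d l (nhds 0)) (h : ∀ ε > 0, ∃ C, ∀ᶠ n in l, |E n| ≤ ε + C * d n) :
    Tendsto E l (nhds 0) := by
  rw [Metric.tendsto_nhds]
  intro ε hε
  obtain ⟨C, hC⟩ := h (ε / 2) (by positivity)
  have hCd : Tendsto (fun n => C * d n) l (nhds 0) := by simpa using hd.const_mul C
  filter_upwards [hC, hCd.eventually (eventually_lt_nhds (half_pos hε))] with n h1 h2
  rw [Real.dist_eq, sub_zero]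
  linarith

theorem riemann_sum_step_general (a b : ℕ → ℕ)
    (p q : ℕ) (hq : 0 < q)
    (L : ℝ) (hL : L = (p : ℝ) / (q : ℝ))
    (hconv : Tendsto (fun n => (b n : ℝ) / (a n : ℝ)) atTop (nhds L))
    (hk : (∃ k : ℝ, 0 < k ∧
            Tendsto (fun n => (a n : ℝ) * |(b n : ℝ) / (a n : ℝ) - L|) atTop (nhds k)) ∨
          Tendsto (fun n => (a n : ℝ) * |(b n : ℝ) / (a n : ℝ) - L|) atTop atTop) :
    ∀ (m : ℤ) (t : ℝ), 0 < t →
      Tendsto (fun n =>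
        (1 / (a n : ℝ)) * ∑ j ∈ Finset.Icc (1 : ℤ) ⌊(a n : ℝ) * t⌋,
            fmLhat L m ((j : ℝ) * ((b n : ℝ) / (a n : ℝ)))
        - (1 / (q : ℝ)) * ∑ η ∈ Finset.Icc 1 q,
            (1 / ((a n : ℝ) * |(b n : ℝ) / (a n : ℝ) - L|)) *
              ∫ x in (0 : ℝ)..((a n : ℝ) * |(b n : ℝ) / (a n : ℝ) - L| * t),
                fmLhat L m ((η : ℝ) * L + Real.sign ((b n : ℝ) / (a n : ℝ) - L) * x))
        atTop (nhds 0) := by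
  intro m t ht
  have hcont := (fmL_continuous L m).continuousOn (s := Set.Icc 0 1)
  obtain ⟨M, hM⟩ := isCompact_Icc.exists_bound_of_continuousOn hcont
  have hM0 : 0 ≤ M := (norm_nonneg _).trans (hM 0 ⟨le_rfl, zero_le_one⟩)
  obtain ⟨A₀, hA₀, hA⟩ := exists_pos_eventually_le_of_tendsto hk
  have hd : Tendsto (fun n => |(b n : ℝ) / a n - L|) atTop (nhds 0) := by
    simpa using (hconv.sub_const L).abs
  refine tendsto_zero_of_forall_eventually_abs_le hd fun ε hε => ?_
  obtain ⟨δ, hδ, hF⟩ := Metric.uniformContinuousOn_iff_le.1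
    (isCompact_Icc.uniformContinuousOn_of_continuous hcont) (ε / t) (by positivity)
  refine ⟨2 * M * q * t + q * (ε / t + 2 * M * (q + 2)) / A₀, ?_⟩
  have hqδ : (0 : ℝ) < δ / q := by positivity
  filter_upwards [hA, hd.eventually (eventually_le_nhds hqδ),
    hd.eventually (eventually_le_nhds one_pos)] with n hAn hδn h1n
  refine (abs_sum_fmLhat_sub_integral_le hq hL hM hF (by positivity) ht (hA₀.trans_le hAn)
    ((le_div_iff₀' (by positivity)).1 hδn)).trans ?_
  rw [mul_div_cancel₀ _ ht.ne']
  have : (q : ℝ) * |(b n : ℝ) / a n - L| ≤ q := mul_le_of_le_one_right (by positivity) h1n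
  gcongr

/-- Riemann-sum approximation step: if `L = p/q` in lowest terms, `L_n = b_n/a_n → L`,
`δ_n = L_n - L ≠ 0` eventually, and `a_n|δ_n| → k` with `k ∈ (0,∞)` or `k = ∞`, then
for every `m ∈ ℤ` and `t > 0`,
`(1/a_n) ∑_{j=1}^{⌊a_n t⌋} f̂_{m,L}(j L_n)
  - (1/q) ∑_{η=1}^{q} (1/(a_n|δ_n|)) ∫_0^{a_n|δ_n| t} f̂_{m,L}(ηL + sgn(δ_n) x) dx → 0`. -/
theorem riemann_sum_step (a b : ℕ → ℕ) (ha : StrictMono a) (hb : StrictMono b)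
    (ha0 : ∀ n, 0 < a n) (hb0 : ∀ n, 0 < b n)
    (p q : ℕ) (hp : 0 < p) (hq : 0 < q) (hpq : Nat.Coprime p q)
    (L : ℝ) (hL : L = (p : ℝ) / (q : ℝ))
    (hconv : Tendsto (fun n => (b n : ℝ) / (a n : ℝ)) atTop (nhds L))
    (hne : ∀ᶠ n in atTop, (b n : ℝ) / (a n : ℝ) - L ≠ 0)
    (hk : (∃ k : ℝ, 0 < k ∧
            Tendsto (fun n => (a n : ℝ) * |(b n : ℝ) / (a n : ℝ) - L|) atTop (nhds k)) ∨
          Tendsto (fun n => (a n : ℝ) * |(b n : ℝ) / (a n : ℝ) - L|) atTop atTop) :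
    ∀ (m : ℤ) (t : ℝ), 0 < t →
      Tendsto (fun n =>
        (1 / (a n : ℝ)) * ∑ j ∈ Finset.Icc (1 : ℤ) ⌊(a n : ℝ) * t⌋,
            fmLhat L m ((j : ℝ) * ((b n : ℝ) / (a n : ℝ)))
        - (1 / (q : ℝ)) * ∑ η ∈ Finset.Icc 1 q,
            (1 / ((a n : ℝ) * |(b n : ℝ) / (a n : ℝ) - L|)) *
              ∫ x in (0 : ℝ)..((a n : ℝ) * |(b n : ℝ) / (a n : ℝ) - L| * t),
                fmLhat L m ((η : ℝ) * L + Real.sign ((b n : ℝ) / (a n : ℝ) - L) * x))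
        atTop (nhds 0) :=
  riemann_sum_step_general a b p q hq L hL hconv hk
end
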